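/- For every x ∈ ℂ with 0 < Re x < 1, the Davenport–Heilbronn completed functions satisfy the functional equations ξ_+(x) = ξ_+(1−x) and ξ_−(x) = −ξ_−(1−x). -/

import Mathlib

open Complex HurwitzZeta

/-- The golden ratio `φ = (1+√5)/2`. -/
noncomputable def goldenPhi : ℝ := (1 + Real.sqrt 5) / 2

/-- `τ₊ := -φ + √(1+φ²)`. -/
noncomputable def tauPlus : ℝ := -goldenPhi + Real.sqrt (1 + goldenPhi ^ 2)

/-- `τ₋ := -φ - √(1+φ²)`. -/
noncomputable def tauMinus : ℝ := -goldenPhi - Real.sqrt (1 + goldenPhi ^ 2)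

/-- The Davenport–Heilbronn function with parameter `τ`:
`f_τ(x) := 5^(-x)·[ζ(x,1/5) + τ·(ζ(x,2/5) - ζ(x,3/5)) - ζ(x,4/5)]`,
where `ζ(x,a)` is the Hurwitz zeta function. -/
noncomputable def fDH (τ : ℝ) (x : ℂ) : ℂ :=
  (5 : ℂ) ^ (-x) * (hurwitzZeta ((1 / 5 : ℝ) : UnitAddCircle) x +
    (τ : ℂ) * (hurwitzZeta ((2 / 5 : ℝ) : UnitAddCircle) x -
      hurwitzZeta ((3 / 5 : ℝ) : UnitAddCircle) x) -
    hurwitzZeta ((4 / 5 : ℝ) : UnitAddCircle) x)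

/-- The completed Davenport–Heilbronn function
`ξ_τ(x) := (π/5)^(-x/2)·Γ((1+x)/2)·f_τ(x)`. -/
noncomputable def xiDH (τ : ℝ) (x : ℂ) : ℂ :=
  ((Real.pi / 5 : ℝ) : ℂ) ^ (-x / 2) * Complex.Gamma ((1 + x) / 2) * fDH τ x


/-!
`f_τ` is the `L`-function of the odd weight `Φ_τ = (0, 1, τ, -τ, -1)` on `ZMod 5`, and
`ξ_τ(x) = √π · 5^(x/2) · Λ(Φ_τ, x)` with `Λ` the completed `L`-function. The odd functional
equation gives `Λ(Φ, 1 - x) = 5^(x-1) · i · Λ(𝓕 Φ, x)` for the discrete Fourier transform `𝓕`.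
Since `sin(2π/5) = φ·sin(π/5)` and `sin(4π/5) = sin(π/5)`, the condition `τ² + 2φτ = 1` defining
`τ_±` makes `Φ_τ` an eigenvector of `𝓕` with eigenvalue `-2i·sin(π/5)·(τ + φ) = ∓ i√5`, which
produces the signs.
-/

open ZMod

lemma sin_two_pi_div_five_eq_goldenPhi_mul :
    Real.sin (2 * Real.pi / 5) = goldenPhi * Real.sin (Real.pi / 5) := by
  rw [show 2 * Real.pi / 5 = 2 * (Real.pi / 5) by ring, Real.sin_two_mul, Real.cos_pi_div_five,
    goldenPhi]
  ring

lemma Real.sin_four_pi_div_five : Real.sin (4 * Real.pi / 5) = Real.sin (Real.pi / 5) := by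
  rw [← Real.sin_pi_sub]; ring_nf

lemma Real.sin_eight_pi_div_five :
    Real.sin (8 * Real.pi / 5) = -Real.sin (2 * Real.pi / 5) := by
  rw [show 8 * Real.pi / 5 = -(2 * Real.pi / 5) + 2 * Real.pi by ring, Real.sin_add_two_pi,
    Real.sin_neg]

lemma two_mul_sin_pi_div_five_mul_sqrt :
    2 * Real.sin (Real.pi / 5) * Real.sqrt (1 + goldenPhi ^ 2) = Real.sqrt 5 := by
  have hsin : 0 ≤ Real.sin (Real.pi / 5) :=
    Real.sin_nonneg_of_nonneg_of_le_pi (by positivity) (by linarith [Real.pi_pos])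
  have hsin_sq : Real.sin (Real.pi / 5) ^ 2 = 1 - ((1 + Real.sqrt 5) / 4) ^ 2 := by
    rw [← Real.cos_pi_div_five, ← Real.sin_sq_add_cos_sq (Real.pi / 5)]; ring
  rw [← Real.sqrt_sq (by positivity : 0 ≤ 2 * Real.sin (Real.pi / 5)),
    ← Real.sqrt_mul (sq_nonneg _), mul_pow, hsin_sq, goldenPhi]
  congr 1
  nlinarith [Real.sq_sqrt (show (0 : ℝ) ≤ 5 by norm_num)]

lemma ofReal_pi_div_cpow_mul_Gamma {N : ℝ} (hN : 0 < N) (x : ℂ) :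
    ((Real.pi / N : ℝ) : ℂ) ^ (-x / 2) * Gamma ((1 + x) / 2) =
      Real.sqrt Real.pi * (N : ℂ) ^ (x / 2) * Gammaℝ (x + 1) := by
  have hπ : (Real.pi : ℂ) ≠ 0 := ofReal_ne_zero.mpr Real.pi_ne_zero
  have hsqrt : (Real.sqrt Real.pi : ℂ) = (Real.pi : ℂ) ^ (1 / 2 : ℂ) := by
    rw [Real.sqrt_eq_rpow, ofReal_cpow Real.pi_pos.le]; norm_num
  rw [ofReal_div, div_cpow_ofReal_nonneg Real.pi_pos.le hN.le, Gammaℝ_def, hsqrt,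
    add_comm 1 x, div_eq_mul_inv _ ((N : ℂ) ^ _), ← cpow_neg, neg_div, neg_neg,
    show -(x / 2) = 1 / 2 + -(x + 1) / 2 by ring, cpow_add _ _ hπ]
  ring

lemma ZMod.stdAddChar_neg_sub {N : ℕ} [NeZero N] (m : ℤ) :
    stdAddChar (-(m : ZMod N)) - stdAddChar (m : ZMod N) =
      -2 * I * Real.sin (2 * Real.pi * m / N) := by
  rw [← Int.cast_neg, stdAddChar_coe, stdAddChar_coe, ofReal_sin]
  push_cast
  rw [show 2 * Real.pi * I * -m / N = -(2 * Real.pi * m / N) * I by ring,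
    show 2 * Real.pi * I * m / N = (2 * Real.pi * m / N : ℂ) * I by ring]
  linear_combination I * two_sin (2 * Real.pi * m / N : ℂ) +
    (cexp (-(2 * Real.pi * m / N) * I) - cexp ((2 * Real.pi * m / N) * I)) * I_sq

lemma ZMod.stdAddChar_five_neg_one_sub :
    stdAddChar (-1 : ZMod 5) - stdAddChar (1 : ZMod 5) =
      -2 * I * ((goldenPhi * Real.sin (Real.pi / 5) : ℝ) : ℂ) := by
  have h := ZMod.stdAddChar_neg_sub (N := 5) 1
  rwa [show 2 * Real.pi * ((1 : ℤ) : ℝ) / ((5 : ℕ) : ℝ) = 2 * Real.pi / 5 by push_cast; ring,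
    sin_two_pi_div_five_eq_goldenPhi_mul, Int.cast_one] at h

lemma ZMod.stdAddChar_five_neg_two_sub :
    stdAddChar (-2 : ZMod 5) - stdAddChar (2 : ZMod 5) = -2 * I * Real.sin (Real.pi / 5) := by
  have h := ZMod.stdAddChar_neg_sub (N := 5) 2
  rwa [show 2 * Real.pi * ((2 : ℤ) : ℝ) / ((5 : ℕ) : ℝ) = 4 * Real.pi / 5 by push_cast; ring,
    Real.sin_four_pi_div_five, Int.cast_ofNat] at h

lemma ZMod.stdAddChar_five_neg_four_sub :
    stdAddChar (-4 : ZMod 5) - stdAddChar (4 : ZMod 5) =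
      2 * I * ((goldenPhi * Real.sin (Real.pi / 5) : ℝ) : ℂ) := by
  have h := ZMod.stdAddChar_neg_sub (N := 5) 4
  rw [show 2 * Real.pi * ((4 : ℤ) : ℝ) / ((5 : ℕ) : ℝ) = 8 * Real.pi / 5 by push_cast; ring,
    Real.sin_eight_pi_div_five, sin_two_pi_div_five_eq_goldenPhi_mul, Int.cast_ofNat,
    ofReal_neg] at h
  linear_combination h

lemma ZMod.sum_five (f : ZMod 5 → ℂ) : ∑ j, f j = f 0 + f 1 + f 2 + f 3 + f 4 :=
  Fin.sum_univ_five f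

lemma ZMod.five_cases (k : ZMod 5) : k = 0 ∨ k = 1 ∨ k = 2 ∨ k = -2 ∨ k = -1 := by
  revert k; decide

lemma ZMod.dft_apply_of_odd_five {Φ : ZMod 5 → ℂ} (hΦ : Φ.Odd) (k : ZMod 5) :
    𝓕 Φ k = Φ 1 * (stdAddChar (-k) - stdAddChar k) +
      Φ 2 * (stdAddChar (-(2 * k)) - stdAddChar (2 * k)) := by
  rw [dft_apply, ZMod.sum_five, hΦ.map_zero, show (3 : ZMod 5) = -2 from rfl,
    show (4 : ZMod 5) = -1 from rfl, hΦ 2, hΦ 1,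
    show -(-2 * k) = 2 * k by ring, show -(-1 * k) = k by ring]
  simp only [smul_eq_mul, one_mul, mul_zero]
  ring

noncomputable def dhWeights (τ : ℝ) : ZMod 5 → ℂ := ![0, 1, τ, -τ, -1]

lemma dhWeights_odd (τ : ℝ) : (dhWeights τ).Odd := by
  intro j
  obtain rfl | rfl | rfl | rfl | rfl := ZMod.five_cases j <;> simp [dhWeights]

lemma fDH_eq_LFunction (τ : ℝ) (x : ℂ) : fDH τ x = LFunction (dhWeights τ) x := by
  rw [fDH, LFunction, ZMod.sum_five]
  simp only [toAddCircle_apply, val_one'' (by decide : 5 ≠ 1), val_ofNat, dhWeights,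
    Matrix.cons_val]
  norm_num
  ring

lemma xiDH_eq_completedLFunction (τ : ℝ) {x : ℂ} (hx : Gammaℝ (x + 1) ≠ 0) :
    xiDH τ x = Real.sqrt Real.pi * (5 : ℂ) ^ (x / 2) * completedLFunction (dhWeights τ) x := by
  rw [xiDH, ofReal_pi_div_cpow_mul_Gamma (by norm_num), fDH_eq_LFunction,
    LFunction_eq_completed_div_gammaFactor_odd (dhWeights_odd τ), ofReal_ofNat]
  field_simp

lemma dft_dhWeights {τ : ℝ} (hτ : (τ + goldenPhi) ^ 2 = 1 + goldenPhi ^ 2) :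
    𝓕 (dhWeights τ) =
      fun k ↦ -2 * I * Real.sin (Real.pi / 5) * (τ + goldenPhi) * dhWeights τ k := by
  have hΦ := dhWeights_odd τ
  have h𝓕Φ : (𝓕 (dhWeights τ)).Odd := dft_odd_iff.mpr hΦ
  have at_one : 𝓕 (dhWeights τ) 1 =
      -2 * I * Real.sin (Real.pi / 5) * (τ + goldenPhi) * dhWeights τ 1 := by
    rw [ZMod.dft_apply_of_odd_five hΦ, mul_one, ZMod.stdAddChar_five_neg_one_sub,
      ZMod.stdAddChar_five_neg_two_sub]
    simp only [dhWeights, Matrix.cons_val, ofReal_mul]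
    ring
  have at_two : 𝓕 (dhWeights τ) 2 =
      -2 * I * Real.sin (Real.pi / 5) * (τ + goldenPhi) * dhWeights τ 2 := by
    rw [ZMod.dft_apply_of_odd_five hΦ, show (2 * 2 : ZMod 5) = 4 from rfl,
      ZMod.stdAddChar_five_neg_two_sub, ZMod.stdAddChar_five_neg_four_sub]
    simp only [dhWeights, Matrix.cons_val, ofReal_mul]
    linear_combination 2 * I * Real.sin (Real.pi / 5) * (by exact_mod_cast hτ :
      ((τ + goldenPhi) ^ 2 : ℂ) = 1 + goldenPhi ^ 2)
  funext k
  obtain rfl | rfl | rfl | rfl | rfl := ZMod.five_cases k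
  · rw [h𝓕Φ.map_zero, hΦ.map_zero, mul_zero]
  · exact at_one
  · exact at_two
  · rw [h𝓕Φ, hΦ, at_two, mul_neg]
  · rw [h𝓕Φ, hΦ, at_one, mul_neg]

lemma completedLFunction_dhWeights_one_sub {τ ε : ℝ}
    (hτ : τ + goldenPhi = ε * Real.sqrt (1 + goldenPhi ^ 2)) (hε : ε ^ 2 = 1) (x : ℂ) :
    completedLFunction (dhWeights τ) (1 - x) =
      ε * Real.sqrt 5 * (5 : ℂ) ^ (x - 1) * completedLFunction (dhWeights τ) x := by
  have hτ_sq : (τ + goldenPhi) ^ 2 = 1 + goldenPhi ^ 2 := by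
    rw [hτ, mul_pow, hε, one_mul, Real.sq_sqrt (by positivity)]
  rw [completedLFunction_one_sub_odd (dhWeights_odd τ), dft_dhWeights hτ_sq,
    completedLFunction_const_mul, ← ofReal_add, hτ, ← two_mul_sin_pi_div_five_mul_sqrt]
  push_cast
  ring_nf
  rw [I_sq]
  ring

lemma xiDH_one_sub {τ ε : ℝ} (hτ : τ + goldenPhi = ε * Real.sqrt (1 + goldenPhi ^ 2))
    (hε : ε ^ 2 = 1) {x : ℂ} (hx₀ : -1 < x.re) (hx₁ : x.re < 2) :
    xiDH τ (1 - x) = ε * xiDH τ x := by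
  have hΓ {y : ℂ} (hy : -1 < y.re) : Gammaℝ (y + 1) ≠ 0 :=
    Gammaℝ_ne_zero_of_re_pos (by simp only [add_re, one_re]; linarith)
  rw [xiDH_eq_completedLFunction τ (hΓ hx₀),
    xiDH_eq_completedLFunction τ (hΓ (by simp only [sub_re, one_re]; linarith)),
    completedLFunction_dhWeights_one_sub hτ hε]
  have h5 : (5 : ℂ) ≠ 0 := by norm_num
  have hpow : (5 : ℂ) ^ ((1 - x) / 2) * Real.sqrt 5 * 5 ^ (x - 1) = 5 ^ (x / 2) := by
    rw [Real.sqrt_eq_rpow, ofReal_cpow (by norm_num), ofReal_ofNat, ← cpow_add _ _ h5,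
      ← cpow_add _ _ h5]
    push_cast
    ring_nf
  linear_combination (Real.sqrt Real.pi * ε * completedLFunction (dhWeights τ) x) * hpow

/-- For every `x ∈ ℂ` with `0 < Re x < 1`, the Davenport–Heilbronn
completed functions satisfy `ξ₊(x) = ξ₊(1-x)` and `ξ₋(x) = -ξ₋(1-x)`. -/
theorem stmt_17 (x : ℂ) (hx0 : 0 < x.re) (hx1 : x.re < 1) :
    xiDH tauPlus x = xiDH tauPlus (1 - x) ∧
    xiDH tauMinus x = -xiDH tauMinus (1 - x) := by
  constructor
  · rw [xiDH_one_sub (ε := 1) (by rw [tauPlus]; ring) (by norm_num) (by linarith) (by linarith)]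
    push_cast; ring
  · rw [xiDH_one_sub (ε := -1) (by rw [tauMinus]; ring) (by norm_num) (by linarith) (by linarith)]
    push_cast; ring
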